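/- Let G = β̂ + π̂ where β̂: ℝ → ℝ is nonnegative, convex, C¹ with β̂(0)=0 and β:=β̂' maximal monotone with β(0)=0, and π̂ ∈ C¹(ℝ) with π := π̂' Lipschitz continuous and π(0)=π̂(0)=0. Assume G(r) + (‖π'‖_{L^∞}/2) r² ≥ 0 for all r. Define G_ε = β̂_ε + π̂ with β̂_ε the Moreau–Yosida regularization of β̂. Then for all r ∈ ℝ and all ε > 0: G_ε(r) ≥ -(‖π'‖_{L^∞}/2) r² - 2‖π'‖_{L^∞} ε r². -/

import Mathlib

/-!
The Moreau–Yosida envelope of the nonnegative `β̂` is nonnegative, and `π̂(r) ≥ -(L/2) r²`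
because `r ↦ π̂(r) + (L/2) r²` has derivative `π(r) + L r`, whose sign is that of `r` since
`|π(r)| ≤ L |r|`; so it is minimal at `0`, where it vanishes. The term `-2 L ε r²` is slack.
-/

noncomputable def moreauYosida (ε : ℝ) (f : ℝ → ℝ) (r : ℝ) : ℝ :=
  ⨅ s : ℝ, 1 / (2 * ε) * |r - s| ^ 2 + f s

lemma moreauYosida_nonneg {ε : ℝ} (hε : 0 ≤ ε) {f : ℝ → ℝ} (hf : ∀ s, 0 ≤ f s) (r : ℝ) :
    0 ≤ moreauYosida ε f r :=
  le_ciInf fun s => add_nonneg (by positivity) (hf s)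

lemma add_half_mul_sq_nonneg_of_lipschitzWith_deriv {f : ℝ → ℝ} {L : NNReal}
    (hf : Differentiable ℝ f) (hLip : LipschitzWith L (deriv f))
    (hf'0 : deriv f 0 = 0) (hf0 : f 0 = 0) (x : ℝ) :
    0 ≤ f x + (L : ℝ) / 2 * x ^ 2 := by
  set g : ℝ → ℝ := fun x => f x + (L : ℝ) / 2 * x ^ 2
  have hg : Differentiable ℝ g := hf.add (by fun_prop)
  have hg' (t : ℝ) : deriv g t = deriv f t + L * t := by
    have := (hf t).hasDerivAt.add ((hasDerivAt_pow 2 t).const_mul ((L : ℝ) / 2))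
    rw [show g = f + fun y => (L : ℝ) / 2 * y ^ 2 from rfl, this.deriv]
    push_cast
    ring
  have hbound (t : ℝ) : |deriv f t| ≤ L * |t| := hLip.norm_le_mul hf'0 t
  have hg0 : g 0 = 0 := by simp [g, hf0]
  change 0 ≤ g x
  rcases le_total 0 x with hx | hx
  · have hmono : MonotoneOn g (Set.Ici 0) :=
      monotoneOn_of_deriv_nonneg (convex_Ici 0) hg.continuous.continuousOn
        hg.differentiableOn fun t ht => by
          rw [interior_Ici, Set.mem_Ioi] at ht
          have := hbound t
          rw [abs_of_pos ht] at this
          rw [hg']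
          linarith [neg_abs_le (deriv f t)]
    simpa [hg0] using hmono Set.self_mem_Ici hx hx
  · have hanti : AntitoneOn g (Set.Iic 0) :=
      antitoneOn_of_deriv_nonpos (convex_Iic 0) hg.continuous.continuousOn
        hg.differentiableOn fun t ht => by
          rw [interior_Iic, Set.mem_Iio] at ht
          have := hbound t
          rw [abs_of_neg ht] at this
          rw [hg']
          linarith [le_abs_self (deriv f t)]
    simpa [hg0] using hanti hx Set.self_mem_Iic hx

theorem stmt_2_general (bhat pihat : ℝ → ℝ) (L : NNReal)
    (hbnonneg : ∀ r, 0 ≤ bhat r)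
    (hpiC1 : ContDiff ℝ 1 pihat) (hpiLip : LipschitzWith L (deriv pihat))
    (hpi0 : deriv pihat 0 = 0) (hpihat0 : pihat 0 = 0)
    (ε : ℝ) (hε : 0 < ε) (r : ℝ) :
    (⨅ s : ℝ, 1 / (2 * ε) * |r - s| ^ 2 + bhat s) + pihat r ≥
      -((L : ℝ) / 2) * r ^ 2 - 2 * (L : ℝ) * ε * r ^ 2 := by
  change moreauYosida ε bhat r + pihat r ≥ _
  have hβ := moreauYosida_nonneg hε.le hbnonneg r
  have hπ := add_half_mul_sq_nonneg_of_lipschitzWith_deriv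
    (hpiC1.differentiable one_ne_zero) hpiLip hpi0 hpihat0 r
  have hslack : 0 ≤ 2 * (L : ℝ) * ε * r ^ 2 := by positivity
  linarith

/-- Lower bound for the regularized potential `G_ε = β̂_ε + π̂`:
`G_ε(r) ≥ -(L/2) r² - 2 L ε r²` where `L = ‖π'‖_∞` is the Lipschitz constant of `π = π̂'`. -/
theorem stmt_2 (bhat pihat : ℝ → ℝ) (L : NNReal)
    (hbC1 : ContDiff ℝ 1 bhat) (hbconv : ConvexOn ℝ Set.univ bhat)
    (hbnonneg : ∀ r, 0 ≤ bhat r) (hb0 : bhat 0 = 0)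
    (hbmono : Monotone (deriv bhat)) (hbd0 : deriv bhat 0 = 0)
    (hpiC1 : ContDiff ℝ 1 pihat) (hpiLip : LipschitzWith L (deriv pihat))
    (hpi0 : deriv pihat 0 = 0) (hpihat0 : pihat 0 = 0)
    (hG : ∀ r : ℝ, 0 ≤ bhat r + pihat r + (L : ℝ) / 2 * r ^ 2)
    (ε : ℝ) (hε : 0 < ε) (r : ℝ) :
    (⨅ s : ℝ, 1 / (2 * ε) * |r - s| ^ 2 + bhat s) + pihat r ≥
      -((L : ℝ) / 2) * r ^ 2 - 2 * (L : ℝ) * ε * r ^ 2 :=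
  stmt_2_general bhat pihat L hbnonneg hpiC1 hpiLip hpi0 hpihat0 ε hε r
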